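/- Let n ≥ 1 and let C = ∏_{k=1}^{N} U(θ_k)_{i_k j_k} be any finite product of exchange gates on (ℂ²)^⊗n, where U(θ)_{ij} = cos θ·I + i sin θ·SWAP_{ij} and i_k ≠ j_k. Then: (i) C commutes with V^⊗n for every 2×2 unitary V; and (ii) C·(V^⊗n)|0…0⟩ = e^{i Σ_{k=1}^{N} θ_k} · (V^⊗n)|0…0⟩ for every 2×2 unitary V. In particular, taking V = H the Hadamard gate, ⟨0…0| H^⊗n C H^⊗n |0…0⟩ = e^{i Σ_k θ_k}, so the partition function of the associated six-vertex model with free boundary conditions equals 2ⁿ e^{i Σ_k θ_k}. -/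

import Mathlib

open Matrix Complex

noncomputable section

/-- The SWAP of tensor factors `i` and `j` on `(ℂ²)^⊗n`. -/
def swapM (n : ℕ) (i j : Fin n) : Matrix (Fin n → Fin 2) (Fin n → Fin 2) ℂ :=
  fun x y => if x = y ∘ Equiv.swap i j then 1 else 0

/-- The exchange gate `U(θ)_{ij} = exp(iθ·SWAP_{ij}) = cos θ·I + i sin θ·SWAP_{ij}`. -/
def exch (n : ℕ) (θ : ℝ) (i j : Fin n) : Matrix (Fin n → Fin 2) (Fin n → Fin 2) ℂ :=
  (Real.cos θ : ℂ) • (1 : Matrix (Fin n → Fin 2) (Fin n → Fin 2) ℂ)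
    + (Complex.I * (Real.sin θ : ℂ)) • swapM n i j

/-- The `n`-fold tensor (Kronecker) power `V^⊗n` of a one-qubit operator. -/
def tpow (n : ℕ) (V : Matrix (Fin 2) (Fin 2) ℂ) :
    Matrix (Fin n → Fin 2) (Fin n → Fin 2) ℂ :=
  fun x y => ∏ i, V (x i) (y i)

/-- The all-zeros computational basis state `|0…0⟩`. -/
def e0s (n : ℕ) : (Fin n → Fin 2) → ℂ :=
  fun x => if x = (fun _ => 0 : Fin n → Fin 2) then 1 else 0

/-- The Hadamard gate `H = (1/√2)[[1,1],[1,-1]]`. -/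
def Hgate : Matrix (Fin 2) (Fin 2) ℂ :=
  (((Real.sqrt 2)⁻¹ : ℝ) : ℂ) • !![1, 1; 1, -1]

/-! A SWAP only relabels tensor factors, so it commutes with every `V^⊗n` and fixes `|0…0⟩`.
Hence `V^⊗n|0…0⟩` is fixed by every SWAP, so it is an eigenvector of each exchange gate
`cos θ + i sin θ·SWAP` with eigenvalue `e^{iθ}`, and of the circuit with eigenvalue `e^{iΣθ_k}`.
Since `H² = 1`, the amplitude `⟨0…0|H^⊗n C H^⊗n|0…0⟩` is that phase. -/

section

variable {n : ℕ}

lemma comp_swap_comp_swap {α : Type*} (i j : Fin n) (x : Fin n → α) :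
    x ∘ Equiv.swap i j ∘ Equiv.swap i j = x :=
  funext fun a => congrArg x (Equiv.swap_apply_self i j a)

lemma swapM_mulVec_apply (i j : Fin n) (v : (Fin n → Fin 2) → ℂ) (x : Fin n → Fin 2) :
    (swapM n i j *ᵥ v) x = v (x ∘ Equiv.swap i j) := by
  have hiff : ∀ z : Fin n → Fin 2, x = z ∘ Equiv.swap i j ↔ z = x ∘ Equiv.swap i j := fun z => by
    constructor <;> rintro rfl <;> exact (comp_swap_comp_swap i j _).symm
  simp [mulVec, dotProduct, swapM, hiff]

lemma swapM_mul_apply (i j : Fin n) (A : Matrix (Fin n → Fin 2) (Fin n → Fin 2) ℂ)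
    (x y : Fin n → Fin 2) : (swapM n i j * A) x y = A (x ∘ Equiv.swap i j) y :=
  swapM_mulVec_apply i j (fun z => A z y) x

lemma mul_swapM_apply (i j : Fin n) (A : Matrix (Fin n → Fin 2) (Fin n → Fin 2) ℂ)
    (x y : Fin n → Fin 2) : (A * swapM n i j) x y = A x (y ∘ Equiv.swap i j) := by
  simp [mul_apply, swapM]

lemma tpow_apply_comp_perm (σ : Equiv.Perm (Fin n)) (V : Matrix (Fin 2) (Fin 2) ℂ)
    (x y : Fin n → Fin 2) : tpow n V (x ∘ σ) (y ∘ σ) = tpow n V x y :=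
  Equiv.prod_comp σ fun a => V (x a) (y a)

lemma swapM_commute_tpow (i j : Fin n) (V : Matrix (Fin 2) (Fin 2) ℂ) :
    Commute (swapM n i j) (tpow n V) := by
  ext x y
  rw [swapM_mul_apply, mul_swapM_apply, ← tpow_apply_comp_perm (Equiv.swap i j),
    Function.comp_assoc, comp_swap_comp_swap]

lemma exch_commute_tpow (θ : ℝ) (i j : Fin n) (V : Matrix (Fin 2) (Fin 2) ℂ) :
    Commute (exch n θ i j) (tpow n V) :=
  ((Commute.one_left _).smul_left _).add_left ((swapM_commute_tpow i j V).smul_left _)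

lemma swapM_mulVec_e0s (i j : Fin n) : swapM n i j *ᵥ e0s n = e0s n := by
  ext x
  rw [swapM_mulVec_apply]
  refine if_congr ⟨fun h => ?_, fun h => by rw [h]; rfl⟩ rfl rfl
  rw [← comp_swap_comp_swap i j x, ← Function.comp_assoc, h]
  rfl

lemma exch_mulVec_of_swapM_mulVec {θ : ℝ} {i j : Fin n} {v : (Fin n → Fin 2) → ℂ}
    (hv : swapM n i j *ᵥ v = v) :
    exch n θ i j *ᵥ v = Complex.exp (Complex.I * θ) • v := by
  rw [exch, add_mulVec, smul_mulVec, smul_mulVec, one_mulVec, hv, ← add_smul,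
    mul_comm I (θ : ℂ), exp_mul_I, ofReal_cos, ofReal_sin, mul_comm I]

lemma list_prod_ofFn_mulVec_eq_smul {ι R : Type*} [Fintype ι] [DecidableEq ι] [CommRing R]
    {N : ℕ} (A : Fin N → Matrix ι ι R) (c : Fin N → R) (v : ι → R) (h : ∀ k, A k *ᵥ v = c k • v) :
    (List.ofFn A).prod *ᵥ v = (∏ k, c k) • v := by
  induction N with
  | zero => simp
  | succ N ih =>
    rw [List.ofFn_succ, List.prod_cons, ← mulVec_mulVec, ih _ _ fun k => h k.succ, mulVec_smul,
      h 0, smul_smul, Fin.prod_univ_succ, mul_comm]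

lemma tpow_mul (A B : Matrix (Fin 2) (Fin 2) ℂ) : tpow n (A * B) = tpow n A * tpow n B := by
  ext x y
  simp only [tpow, mul_apply, Finset.prod_univ_sum, Fintype.piFinset_univ, Finset.prod_mul_distrib]

lemma tpow_one : tpow n (1 : Matrix (Fin 2) (Fin 2) ℂ) = 1 := by
  ext x y
  simp [tpow, one_apply, Finset.prod_boole, funext_iff]

lemma Hgate_mul_self : Hgate * Hgate = 1 := by
  have hs : (((Real.sqrt 2)⁻¹ : ℝ) : ℂ) * (((Real.sqrt 2)⁻¹ : ℝ) : ℂ) = 2⁻¹ := by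
    rw [← ofReal_mul, ← mul_inv, Real.mul_self_sqrt zero_le_two]; push_cast; rfl
  rw [Hgate, smul_mul_smul_comm, hs]
  ext i j
  fin_cases i <;> fin_cases j <;> simp <;> norm_num

lemma e0s_dotProduct_self : e0s n ⬝ᵥ e0s n = 1 := by
  simp [dotProduct, e0s]

lemma exch_circuit_mulVec_tpow_mulVec_e0s {N : ℕ} (θ : Fin N → ℝ) (idx : Fin N → Fin n × Fin n)
    (V : Matrix (Fin 2) (Fin 2) ℂ) :
    (List.ofFn fun k => exch n (θ k) (idx k).1 (idx k).2).prod *ᵥ (tpow n V *ᵥ e0s n)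
      = Complex.exp (Complex.I * ((∑ k, θ k : ℝ) : ℂ)) • (tpow n V *ᵥ e0s n) := by
  have hfix (i j : Fin n) : swapM n i j *ᵥ (tpow n V *ᵥ e0s n) = tpow n V *ᵥ e0s n := by
    rw [mulVec_mulVec, swapM_commute_tpow i j V, ← mulVec_mulVec, swapM_mulVec_e0s]
  rw [list_prod_ofFn_mulVec_eq_smul _ _ _
      fun k => exch_mulVec_of_swapM_mulVec (θ := θ k) (hfix _ _), ← Complex.exp_sum]
  push_cast
  rw [Finset.mul_sum]

end

theorem exchange_circuit_phase_general (n N : ℕ)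
    (θ : Fin N → ℝ) (idx : Fin N → Fin n × Fin n) :
    let Ccirc := (List.ofFn fun k : Fin N => exch n (θ k) (idx k).1 (idx k).2).prod
    (∀ V : Matrix (Fin 2) (Fin 2) ℂ, V ∈ Matrix.unitaryGroup (Fin 2) ℂ →
        Ccirc * tpow n V = tpow n V * Ccirc)
    ∧ (∀ V : Matrix (Fin 2) (Fin 2) ℂ, V ∈ Matrix.unitaryGroup (Fin 2) ℂ →
        Ccirc *ᵥ (tpow n V *ᵥ e0s n)
          = Complex.exp (Complex.I * ((∑ k, θ k : ℝ) : ℂ)) • (tpow n V *ᵥ e0s n))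
    ∧ (e0s n ⬝ᵥ ((tpow n Hgate * Ccirc * tpow n Hgate) *ᵥ e0s n)
          = Complex.exp (Complex.I * ((∑ k, θ k : ℝ) : ℂ)))
    ∧ ((2 ^ n : ℂ) * (e0s n ⬝ᵥ ((tpow n Hgate * Ccirc * tpow n Hgate) *ᵥ e0s n))
          = (2 ^ n : ℂ) * Complex.exp (Complex.I * ((∑ k, θ k : ℝ) : ℂ))) := by
  intro Ccirc
  have hcomm (V : Matrix (Fin 2) (Fin 2) ℂ) : Commute Ccirc (tpow n V) :=
    Commute.list_prod_left _ _ fun _ hA => by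
      obtain ⟨k, rfl⟩ := List.mem_ofFn.mp hA
      exact exch_commute_tpow _ _ _ V
  have hamp : e0s n ⬝ᵥ ((tpow n Hgate * Ccirc * tpow n Hgate) *ᵥ e0s n)
      = Complex.exp (Complex.I * ((∑ k, θ k : ℝ) : ℂ)) := by
    rw [← mulVec_mulVec, ← mulVec_mulVec, exch_circuit_mulVec_tpow_mulVec_e0s, mulVec_smul,
      mulVec_mulVec, ← tpow_mul, Hgate_mul_self, tpow_one, one_mulVec, dotProduct_smul,
      e0s_dotProduct_self, smul_eq_mul, mul_one]
  exact ⟨fun V _ => hcomm V, fun V _ => exch_circuit_mulVec_tpow_mulVec_e0s θ idx V, hamp,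
    congrArg _ hamp⟩

/-- Any product `C` of exchange gates commutes with `V^⊗n` for every unitary `V`,
satisfies `C (V^⊗n)|0…0⟩ = e^{iΣθ_k}(V^⊗n)|0…0⟩`, and hence
`⟨0…0|H^⊗n C H^⊗n|0…0⟩ = e^{iΣθ_k}`, so the free-boundary six-vertex partition
function equals `2ⁿ e^{iΣθ_k}`. -/
theorem exchange_circuit_phase (n N : ℕ) (hn : 1 ≤ n)
    (θ : Fin N → ℝ) (idx : Fin N → Fin n × Fin n)
    (hidx : ∀ k, (idx k).1 ≠ (idx k).2) :
    let Ccirc := (List.ofFn fun k : Fin N => exch n (θ k) (idx k).1 (idx k).2).prod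
    (∀ V : Matrix (Fin 2) (Fin 2) ℂ, V ∈ Matrix.unitaryGroup (Fin 2) ℂ →
        Ccirc * tpow n V = tpow n V * Ccirc)
    ∧ (∀ V : Matrix (Fin 2) (Fin 2) ℂ, V ∈ Matrix.unitaryGroup (Fin 2) ℂ →
        Ccirc *ᵥ (tpow n V *ᵥ e0s n)
          = Complex.exp (Complex.I * ((∑ k, θ k : ℝ) : ℂ)) • (tpow n V *ᵥ e0s n))
    ∧ (e0s n ⬝ᵥ ((tpow n Hgate * Ccirc * tpow n Hgate) *ᵥ e0s n)
          = Complex.exp (Complex.I * ((∑ k, θ k : ℝ) : ℂ)))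
    ∧ ((2 ^ n : ℂ) * (e0s n ⬝ᵥ ((tpow n Hgate * Ccirc * tpow n Hgate) *ᵥ e0s n))
          = (2 ^ n : ℂ) * Complex.exp (Complex.I * ((∑ k, θ k : ℝ) : ℂ))) :=
  exchange_circuit_phase_general n N θ idx
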